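/- Let R be a *-ring and p, q projectors with p - q Moore-Penrose invertible. Then 1 - pqp is Moore-Penrose invertible with (1-pqp)† = p((p-q)†)² + (1-p), and 1 - pq is Moore-Penrose invertible with (1-pq)† = p((p-q)†)² - pq(p-q)† + 1 - p. -/

import Mathlib

/-- `b` is a Moore-Penrose inverse of `a`. -/
def IsMP {R : Type*} [Ring R] [StarRing R] (a b : R) : Prop :=
  a * b * a = a ∧ b * a * b = b ∧ star (a * b) = a * b ∧ star (b * a) = b * a

/-- `p` is a projector: `p² = p = p*`. -/
def IsProjector {R : Type*} [Ring R] [StarRing R] (p : R) : Prop :=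
  p * p = p ∧ star p = p

/-- `a` is *-cancellable. -/
def StarCancellable {R : Type*} [Ring R] [StarRing R] (a : R) : Prop :=
  (∀ x : R, star a * a * x = 0 → a * x = 0) ∧ (∀ x : R, x * (a * star a) = 0 → x * a = 0)

/-!
Put `a = p - q`; it is self-adjoint, so `d = a†` is self-adjoint and commutes with `a`.
Since `q` is idempotent, `a² = pa + ap - a`, so `p` commutes with `a²`, hence with
`(a²)† = d²` and with the projection `ad = a²d²`. Thus `1 - pqp = (1 - p) + pa²` splits
along `p`, with Moore-Penrose inverse `(1 - p) + pd²`. For `1 - pq = (1 - p) + pa`, both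
products with the proposed inverse are the projection `(1 - p) + pad`, which fixes both
factors from the left.
-/

section

variable {R : Type*} [Ring R]

theorem one_sub_add_mul_mul_one_sub_add_mul {p z : R} (hp : IsIdempotentElem p)
    (hz : Commute p z) (w : R) :
    (1 - p + p * z) * (1 - p + p * w) = 1 - p + p * (z * w) := by
  have hpc : (1 - p) * p = 0 := by rw [sub_mul, one_mul, hp.eq, sub_self]
  have hcp : p * (1 - p) = 0 := by rw [mul_sub, mul_one, hp.eq, sub_self]
  have hcc : (1 - p) * (1 - p) = 1 - p := by rw [sub_mul, one_mul, hcp, sub_zero]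
  calc (1 - p + p * z) * (1 - p + p * w)
      = (1 - p) * (1 - p) + (1 - p) * p * w + z * (p * (1 - p)) + z * (p * p) * w := by
        rw [hz.eq]; noncomm_ring
    _ = 1 - p + p * (z * w) := by
        rw [hcc, hpc, hcp, hp.eq, ← hz.eq]; noncomm_ring

section IdempotentDifference

variable {p a : R}

theorem mul_self_eq_of_isIdempotentElem_sub (hp : IsIdempotentElem p)
    (hq : IsIdempotentElem (p - a)) : a * a = p * a + a * p - a := by
  have h : (p - a) * (p - a) = p - a := hq.eq
  rw [sub_mul, mul_sub, mul_sub, hp.eq, ← sub_eq_zero] at h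
  rw [← sub_eq_zero, ← h]
  abel

theorem mul_mul_self_eq_of_isIdempotentElem_sub (hp : IsIdempotentElem p)
    (hq : IsIdempotentElem (p - a)) : p * (a * a) = p * a * p := by
  rw [mul_self_eq_of_isIdempotentElem_sub hp hq, mul_sub, mul_add, ← mul_assoc p p, hp.eq,
    mul_assoc]
  abel

theorem mul_self_mul_eq_of_isIdempotentElem_sub (hp : IsIdempotentElem p)
    (hq : IsIdempotentElem (p - a)) : a * a * p = p * a * p := by
  rw [mul_self_eq_of_isIdempotentElem_sub hp hq, sub_mul, add_mul, mul_assoc a p p, hp.eq]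
  abel

theorem commute_mul_self_of_isIdempotentElem_sub (hp : IsIdempotentElem p)
    (hq : IsIdempotentElem (p - a)) : Commute p (a * a) :=
  (mul_mul_self_eq_of_isIdempotentElem_sub hp hq).trans
    (mul_self_mul_eq_of_isIdempotentElem_sub hp hq).symm

end IdempotentDifference

variable [StarRing R]

theorem IsMP.unique {a b c : R} (hb : IsMP a b) (hc : IsMP a c) : b = c := by
  obtain ⟨hb₁, hb₂, hb₃, hb₄⟩ := hb
  obtain ⟨hc₁, hc₂, hc₃, hc₄⟩ := hc
  have hab : a * b = a * c :=
    calc a * b = star (a * c * (a * b)) := by rw [← mul_assoc, hc₁, hb₃]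
      _ = a * b * (a * c) := by rw [star_mul, hb₃, hc₃]
      _ = a * c := by rw [← mul_assoc, hb₁]
  have hba : b * a = c * a :=
    calc b * a = star (b * a * (c * a)) := by rw [mul_assoc, ← mul_assoc a, hc₁, hb₄]
      _ = c * a * (b * a) := by rw [star_mul, hb₄, hc₄]
      _ = c * a := by rw [mul_assoc, ← mul_assoc a, hb₁]
  calc b = b * (a * c) := by rw [← hab, ← mul_assoc, hb₂]
    _ = c := by rw [← mul_assoc, hba, hc₂]

theorem IsMP.star {a b : R} (h : IsMP a b) : IsMP (star a) (star b) := by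
  obtain ⟨h₁, h₂, h₃, h₄⟩ := h
  refine ⟨?_, ?_, ?_, ?_⟩
  · rw [← star_mul, ← star_mul, ← mul_assoc, h₁]
  · rw [← star_mul, ← star_mul, ← mul_assoc, h₂]
  · rw [← star_mul, star_star, h₄]
  · rw [← star_mul, star_star, h₃]

theorem IsMP.isSelfAdjoint {a b : R} (h : IsMP a b) (ha : IsSelfAdjoint a) :
    IsSelfAdjoint b := by
  have h' := h.star
  rw [ha.star_eq] at h'
  exact h'.unique h

theorem IsMP.commute {a b : R} (h : IsMP a b) (ha : IsSelfAdjoint a) : Commute a b := by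
  have h₃ := h.2.2.1
  rw [star_mul, ha.star_eq, (h.isSelfAdjoint ha).star_eq] at h₃
  exact h₃.symm

theorem isMP_of_mul_eq {a b g : R} (hab : a * b = g) (hba : b * a = g) (hg : IsSelfAdjoint g)
    (hga : g * a = a) (hgb : g * b = b) : IsMP a b :=
  ⟨by rw [hab, hga], by rw [hba, hgb], by rw [hab, hg.star_eq], by rw [hba, hg.star_eq]⟩

theorem IsMP.mul_self {a b : R} (h : IsMP a b) (hab : Commute a b) : IsMP (a * a) (b * b) := by
  obtain ⟨h₁, h₂, h₃, -⟩ := h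
  have hπ : a * a * (b * b) = a * b := by
    rw [hab.mul_mul_mul_comm, ← mul_assoc, h₁]
  have hπ' : b * b * (a * a) = a * b := by
    rw [hab.symm.mul_mul_mul_comm, ← mul_assoc, h₂, hab.eq]
  refine ⟨?_, ?_, ?_, ?_⟩
  · rw [hπ, ← mul_assoc, h₁]
  · rw [hπ', ← mul_assoc, hab.eq, h₂]
  · rw [hπ, h₃]
  · rw [hπ', h₃]

theorem IsMP.commute_of_commute {e f x : R} (h : IsMP e f) (hef : Commute e f)
    (hx : Commute x e) : Commute x f := by
  obtain ⟨h₁, h₂, -, -⟩ := h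
  have heπ : e * (e * f) = e := by rw [hef.eq, ← mul_assoc, h₁]
  have hπf : e * f * f = f := by rw [hef.eq, h₂]
  have hπx : e * f * x = f * x * e := by
    rw [hef.eq, mul_assoc, ← hx.eq, ← mul_assoc]
  have hxπ : x * (e * f) = e * x * f := by
    rw [← mul_assoc, hx.eq]
  have hr : e * f * x * (1 - e * f) = 0 := by
    rw [hπx, mul_assoc, mul_sub, mul_one, heπ, sub_self, mul_zero]
  have hl : (1 - e * f) * x * (e * f) = 0 := by
    rw [mul_assoc, hxπ, ← mul_assoc, ← mul_assoc, sub_mul, one_mul, h₁, sub_self,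
      zero_mul, zero_mul]
  -- both off-diagonal corners of `x` with respect to the projection `e * f` vanish
  have hcomm : e * f * x = x * (e * f) := by
    rw [mul_sub, mul_one, sub_eq_zero] at hr
    rw [sub_mul, sub_mul, one_mul, sub_eq_zero] at hl
    rw [hr, hl]
  calc x * f = e * f * x * f := by rw [hcomm, mul_assoc, hπf]
    _ = f * x * (e * f) := by rw [hπx, mul_assoc _ e f]
    _ = f * x := by rw [mul_assoc, ← hcomm, ← mul_assoc, ← mul_assoc, h₂]

theorem IsMP.mul_self_mul_mul_self {a b : R} (h : IsMP a b) (hab : Commute a b) :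
    a * a * (b * b) = a * b := by
  rw [hab.mul_mul_mul_comm, ← mul_assoc, h.1]

theorem IsMP.commute_mul_self {a b x : R} (h : IsMP a b) (ha : IsSelfAdjoint a)
    (hx : Commute x (a * a)) : Commute x (b * b) :=
  have hab := h.commute ha
  (h.mul_self hab).commute_of_commute ((hab.mul_left hab).mul_right (hab.mul_left hab)) hx

theorem isSelfAdjoint_one_sub_add_mul {p z : R} (hp : IsSelfAdjoint p) (hz : Commute p z)
    (hsz : IsSelfAdjoint z) : IsSelfAdjoint (1 - p + p * z) := by
  rw [IsSelfAdjoint, star_add, star_sub, star_one, star_mul, hp.star_eq, hsz.star_eq, hz.eq]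

theorem IsMP.one_sub_add_mul {p x y : R} (hp : IsProjector p) (hx : Commute p x)
    (hy : Commute p y) (h : IsMP x y) : IsMP (1 - p + p * x) (1 - p + p * y) := by
  obtain ⟨h₁, h₂, h₃, h₄⟩ := h
  have hxy := hx.mul_right hy
  have hyx := hy.mul_right hx
  refine ⟨?_, ?_, ?_, ?_⟩
  · rw [one_sub_add_mul_mul_one_sub_add_mul hp.1 hx,
      one_sub_add_mul_mul_one_sub_add_mul hp.1 hxy, h₁]
  · rw [one_sub_add_mul_mul_one_sub_add_mul hp.1 hy,
      one_sub_add_mul_mul_one_sub_add_mul hp.1 hyx, h₂]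
  · rw [one_sub_add_mul_mul_one_sub_add_mul hp.1 hx]
    exact isSelfAdjoint_one_sub_add_mul hp.2 hxy h₃
  · rw [one_sub_add_mul_mul_one_sub_add_mul hp.1 hy]
    exact isSelfAdjoint_one_sub_add_mul hp.2 hyx h₄

section ProjectorDifference

variable {p a d : R}

theorem isSelfAdjoint_of_isProjector_sub (hp : IsProjector p) (hq : IsProjector (p - a)) :
    IsSelfAdjoint a := by
  have h : star (p - a) = p - a := hq.2
  rwa [star_sub, hp.2, sub_right_inj] at h

theorem commute_mp_mul_self_of_isProjector_sub (hp : IsProjector p) (hq : IsProjector (p - a))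
    (hd : IsMP a d) : Commute p (d * d) :=
  hd.commute_mul_self (isSelfAdjoint_of_isProjector_sub hp hq)
    (commute_mul_self_of_isIdempotentElem_sub hp.1 hq.1)

theorem commute_mul_mp_of_isProjector_sub (hp : IsProjector p) (hq : IsProjector (p - a))
    (hd : IsMP a d) : Commute p (a * d) := by
  rw [← hd.mul_self_mul_mul_self (hd.commute (isSelfAdjoint_of_isProjector_sub hp hq))]
  exact (commute_mul_self_of_isIdempotentElem_sub hp.1 hq.1).mul_right
    (commute_mp_mul_self_of_isProjector_sub hp hq hd)

theorem IsMP.one_sub_mul_sub_mul (hp : IsProjector p) (hq : IsProjector (p - a))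
    (hd : IsMP a d) : IsMP (1 - p * (p - a) * p) (p * (d * d) + (1 - p)) := by
  have he : 1 - p * (p - a) * p = 1 - p + p * (a * a) := by
    rw [mul_sub, sub_mul, hp.1, hp.1, ← mul_mul_self_eq_of_isIdempotentElem_sub hp.1 hq.1]
    abel
  rw [he, add_comm (p * (d * d))]
  exact (hd.mul_self (hd.commute (isSelfAdjoint_of_isProjector_sub hp hq))).one_sub_add_mul hp
    (commute_mul_self_of_isIdempotentElem_sub hp.1 hq.1)
    (commute_mp_mul_self_of_isProjector_sub hp hq hd)

theorem mul_mp_mul_eq_of_isProjector_sub (hp : IsProjector p) (hq : IsProjector (p - a))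
    (hd : IsMP a d) : p * d * p = p * (a * d) := by
  have had := hd.commute (isSelfAdjoint_of_isProjector_sub hp hq)
  have hadd : a * (d * d) = d := by rw [← mul_assoc, had.eq, hd.2.1]
  calc p * d * p = p * (a * (d * d)) * p := by rw [hadd]
    _ = p * a * (d * d * p) := by simp only [mul_assoc]
    _ = p * a * p * (d * d) := by
      rw [mul_assoc (p * a), (commute_mp_mul_self_of_isProjector_sub hp hq hd).eq]
    _ = p * (a * d) := by
      rw [← mul_mul_self_eq_of_isIdempotentElem_sub hp.1 hq.1, mul_assoc,
        hd.mul_self_mul_mul_self had]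

theorem IsMP.one_sub_mul_sub (hp : IsProjector p) (hq : IsProjector (p - a)) (hd : IsMP a d) :
    IsMP (1 - p * (p - a)) (p * (d * d) - p * (p - a) * d + 1 - p) := by
  have had := hd.commute (isSelfAdjoint_of_isProjector_sub hp hq)
  have hpd2 := commute_mp_mul_self_of_isProjector_sub hp hq hd
  have hpad := commute_mul_mp_of_isProjector_sub hp hq hd
  have haad : a * a * d = a := by rw [mul_assoc, had.eq, ← mul_assoc, hd.1]
  have hdda : d * d * a = d := by rw [mul_assoc, ← had.eq, ← mul_assoc, hd.2.1]
  have hadd : a * d * d = d := by rw [had.eq, hd.2.1]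
  set c := d * d - d + a * d with hc
  have hu : 1 - p * (p - a) = 1 - p + p * a := by rw [mul_sub, hp.1]; abel
  have hb : p * (d * d) - p * (p - a) * d + 1 - p = 1 - p + p * c := by
    rw [hc, mul_sub p p a, hp.1]; noncomm_ring
  have hup : (1 - p + p * a) * p = p * (a * a) := by
    rw [add_mul, sub_mul, one_mul, hp.1, ← mul_mul_self_eq_of_isIdempotentElem_sub hp.1 hq.1]
    abel
  have hbp : (1 - p + p * c) * p = p * (d * d) :=
    calc (1 - p + p * c) * p
        = p - p * p + p * (d * d * p) - p * d * p + p * (a * d * p) := by rw [hc]; noncomm_ring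
      _ = p * (d * d) := by
        rw [mul_mp_mul_eq_of_isProjector_sub hp hq hd, ← hpd2.eq, ← hpad.eq, ← mul_assoc p p,
          ← mul_assoc p p, hp.1]
        abel
  have haac : a * a * c = a * d - a + a * a := by
    rw [hc, mul_add, mul_sub, hd.mul_self_mul_mul_self had, haad, mul_assoc, ← mul_assoc a a d,
      haad]
  have hadc : a * d * c = c := by
    rw [hc, mul_add, mul_sub, ← mul_assoc, hadd, ← mul_assoc, hd.1]
  rw [hu, hb]
  refine isMP_of_mul_eq (g := 1 - p + p * (a * d)) ?_ ?_
    (isSelfAdjoint_one_sub_add_mul hp.2 hpad hd.2.2.1) ?_ ?_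
  · calc (1 - p + p * a) * (1 - p + p * c)
        = 1 - p + p * a - (1 - p + p * a) * p + (1 - p + p * a) * p * c := by noncomm_ring
      _ = 1 - p + p * (a * d) := by rw [hup, mul_assoc, haac]; noncomm_ring
  · calc (1 - p + p * c) * (1 - p + p * a)
        = 1 - p + p * c - (1 - p + p * c) * p + (1 - p + p * c) * p * a := by noncomm_ring
      _ = 1 - p + p * (a * d) := by rw [hbp, mul_assoc, hdda, hc]; noncomm_ring
  · rw [one_sub_add_mul_mul_one_sub_add_mul hp.1 hpad, hd.1]
  · rw [one_sub_add_mul_mul_one_sub_add_mul hp.1 hpad, hadc]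

end ProjectorDifference

end

theorem stmt17 {R : Type*} [Ring R] [StarRing R] (p q d : R)
    (hp : IsProjector p) (hq : IsProjector q)
    (hd : IsMP (p - q) d) :
    IsMP (1 - p * q * p) (p * (d * d) + (1 - p)) ∧
    IsMP (1 - p * q) (p * (d * d) - p * q * d + 1 - p) := by
  obtain ⟨a, rfl⟩ : ∃ a, q = p - a := ⟨p - q, (sub_sub_cancel p q).symm⟩
  rw [sub_sub_cancel] at hd
  exact ⟨hd.one_sub_mul_sub_mul hp hq, hd.one_sub_mul_sub hp hq⟩
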